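/- arXiv:2202.12440 — 3 statements merged into one kernel-verified Lean document; each statement's English description precedes it below -/
import Mathlib

section
/- Suppose the structural equation f_A satisfies the strong non-sensitive condition f_A(s, u) = g(s) + h(u) for functions g : 𝒮 → ℝ and h : ℝ → ℝ, with E[h(U_A)] finite. Then the orthogonalized value P_O(s, f_A(s, u)) = f_A(s, u) − E[A | S = s] + E[A] equals h(u) − E[h(U_A)] + E[A] and hence does not depend on s, where A = f_A(S, U_A) and U_A is independent of S. -/
/-! On `{S = s}` the term `g (S ω)` is the constant `g s`, and independence of `S` and `U_A`
makes the average of `h (U_A)` over `{S = s}` equal to its mean,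
so `E[A | S = s] = g s + E[h(U_A)]`. -/

open MeasureTheory ProbabilityTheory

theorem ProbabilityTheory.IndepFun.setIntegral_preimage_eq_smul_integral {Ω 𝓧 E : Type*}
    {mΩ : MeasurableSpace Ω} {μ : Measure Ω} [MeasurableSpace 𝓧]
    [NormedAddCommGroup E] [NormedSpace ℝ E] [MeasurableSpace E] [BorelSpace E]
    {X : Ω → 𝓧} {Y : Ω → E} (hXY : IndepFun X Y μ)
    (hY : AEStronglyMeasurable Y μ) {B : Set 𝓧} (hB : MeasurableSet B) (hX : Measurable X) :
    ∫ ω in X ⁻¹' B, Y ω ∂μ = μ.real (X ⁻¹' B) • ∫ ω, Y ω ∂μ := by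
  have hind : IndepFun (fun ω => B.indicator (1 : 𝓧 → ℝ) (X ω)) Y μ :=
    hXY.comp (measurable_one.indicator hB) measurable_id
  have hindm : Measurable fun ω => B.indicator (1 : 𝓧 → ℝ) (X ω) :=
    (measurable_one.indicator hB).comp hX
  have hint : ∫ ω, B.indicator (1 : 𝓧 → ℝ) (X ω) ∂μ = μ.real (X ⁻¹' B) := by
    rw [← integral_indicator_one (hX hB)]
    rfl
  rw [← hint, ← hind.integral_fun_smul_eq_smul_integral hindm.aestronglyMeasurable hY,
    ← integral_indicator (hX hB)]
  congr 1 with ω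
  by_cases hω : X ω ∈ B <;> simp [Set.indicator, hω]

theorem stmt_5_general {Ω : Type*} [MeasurableSpace Ω]
    (μ : Measure Ω) [IsProbabilityMeasure μ]
    {𝒮 : Type*} [MeasurableSpace 𝒮] [MeasurableSingletonClass 𝒮]
    (S : Ω → 𝒮) (UA : Ω → ℝ) (hSm : Measurable S)
    (g : 𝒮 → ℝ) (h : ℝ → ℝ) (hhm : Measurable h)
    (hInt : Integrable (fun ω => h (UA ω)) μ)
    (hindep : IndepFun S UA μ)
    (hpos : ∀ s : 𝒮, μ {ω | S ω = s} ≠ 0)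
    (s : 𝒮) (u : ℝ) :
    (g s + h u) - (⨍ ω in {ω | S ω = s}, (g (S ω) + h (UA ω)) ∂μ)
        + (∫ ω, (g (S ω) + h (UA ω)) ∂μ)
      = h u - (∫ ω, h (UA ω) ∂μ) + (∫ ω, (g (S ω) + h (UA ω)) ∂μ) := by
  set E : Set Ω := S ⁻¹' {s}
  have hE : MeasurableSet E := hSm (measurableSet_singleton s)
  have hμE : μ.real E ≠ 0 := (measureReal_ne_zero_iff (measure_ne_top μ E)).2 (hpos s)
  have hindep_h : IndepFun S (fun ω => h (UA ω)) μ := hindep.comp measurable_id hhm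
  have hsetIntegral : ∫ ω in E, (g (S ω) + h (UA ω)) ∂μ
      = μ.real E * (g s + ∫ ω, h (UA ω) ∂μ) := by
    rw [setIntegral_congr_fun hE fun ω (hω : S ω = s) => by rw [hω],
      integral_add (integrable_const (g s)) hInt.integrableOn,
      setIntegral_const, hindep_h.setIntegral_preimage_eq_smul_integral
        hInt.aestronglyMeasurable (measurableSet_singleton s) hSm, smul_eq_mul, smul_eq_mul,
      mul_add]
  have hsetAverage : ⨍ ω in E, (g (S ω) + h (UA ω)) ∂μ = g s + ∫ ω, h (UA ω) ∂μ := by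
    rw [setAverage_eq, hsetIntegral, smul_eq_mul, inv_mul_cancel_left₀ hμE]
  change (g s + h u) - ⨍ ω in E, (g (S ω) + h (UA ω)) ∂μ + _ = _
  rw [hsetAverage]
  ring

/-- Under the strong non-sensitive condition `f_A(s,u) = g(s) + h(u)`, with `U_A`
independent of `S`, the orthogonalized value
`P_O(s, f_A(s,u)) = f_A(s,u) − E[A | S = s] + E[A]` equals `h(u) − E[h(U_A)] + E[A]`,
and hence does not depend on `s`. -/
theorem stmt_5 {Ω : Type*} [MeasurableSpace Ω]
    (μ : Measure Ω) [IsProbabilityMeasure μ]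
    {𝒮 : Type*} [Fintype 𝒮] [MeasurableSpace 𝒮] [MeasurableSingletonClass 𝒮]
    (S : Ω → 𝒮) (UA : Ω → ℝ) (hSm : Measurable S) (hUAm : Measurable UA)
    (g : 𝒮 → ℝ) (h : ℝ → ℝ) (hhm : Measurable h)
    (hInt : Integrable (fun ω => h (UA ω)) μ)
    (hindep : IndepFun S UA μ)
    (hpos : ∀ s : 𝒮, μ {ω | S ω = s} ≠ 0)
    (s : 𝒮) (u : ℝ) :
    (g s + h u) - (⨍ ω in {ω | S ω = s}, (g (S ω) + h (UA ω)) ∂μ)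
        + (∫ ω, (g (S ω) + h (UA ω)) ∂μ)
      = h u - (∫ ω, h (UA ω) ∂μ) + (∫ ω, (g (S ω) + h (UA ω)) ∂μ) :=
  stmt_5_general μ S UA hSm g h hhm hInt hindep hpos s u
end

section
/- In Example 1, the counterfactual income under intervention S := 1 given observed S = 0 and A = a* equals c₁ (a*/c₁)^{σ_a} e^{λ_a + (1 − σ_a) c₂}; in particular it equals a* for all a* > 0 if and only if σ_a = 1 and λ_a = 0. -/
/-!
Substituting the abducted noise `u* = (log(a*/c₁) − c₂)/c₃` into the exponent at `S = 1` gives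
`σ_a log(a*/c₁) + λ_a + (1 − σ_a) c₂`, so the counterfactual is `c₁ (a*/c₁)^{σ_a} e^{k}` with
`k = λ_a + (1 − σ_a) c₂`. Such a map is the identity on `(0, ∞)` iff `σ_a = 1` and `k = 0`:
evaluate it at `a* = c₁` to get `k = 0`, then at `a* = c₁ e` to get `σ_a = 1`.
-/

open Real

lemma counterfactual_exponent_eq {c₂ c₃ lam σ : ℝ} (hc₃ : c₃ ≠ 0) (L : ℝ) :
    c₂ + lam + c₃ * σ * ((L - c₂) / c₃) = σ * L + (lam + (1 - σ) * c₂) := by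
  field_simp
  ring

lemma exp_mul_log_add {x : ℝ} (hx : 0 < x) (σ k : ℝ) :
    exp (σ * log x + k) = x ^ σ * exp k := by
  rw [exp_add, rpow_def_of_pos hx, mul_comm σ]

lemma mul_div_rpow_mul_exp_eq_self_iff {c σ k : ℝ} (hc : 0 < c) :
    (∀ a : ℝ, 0 < a → c * (a / c) ^ σ * exp k = a) ↔ σ = 1 ∧ k = 0 := by
  constructor
  · intro h
    have hk : k = 0 := by
      have hc' := h c hc
      rw [div_self hc.ne', one_rpow, mul_one] at hc'
      exact exp_eq_one_iff k |>.mp <| mul_left_cancel₀ hc.ne' <| hc'.trans (mul_one c).symm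
    refine ⟨?_, hk⟩
    have he := h (c * exp 1) (by positivity)
    rw [mul_div_cancel_left₀ _ hc.ne', exp_one_rpow, hk, exp_zero, mul_one] at he
    exact exp_injective (mul_left_cancel₀ hc.ne' he)
  · rintro ⟨rfl, rfl⟩ a _
    rw [rpow_one, exp_zero, mul_one, mul_div_cancel₀ _ hc.ne']

theorem stmt_14_general (c₁ c₂ c₃ lam σa : ℝ) (hc₁ : 0 < c₁) (hc₃ : 0 < c₃) :
    (∀ astar : ℝ, 0 < astar →
      c₁ * Real.exp (c₂ + lam + c₃ * σa * ((Real.log (astar / c₁) - c₂) / c₃))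
        = c₁ * (astar / c₁) ^ σa * Real.exp (lam + (1 - σa) * c₂)) ∧
    ((∀ astar : ℝ, 0 < astar →
        c₁ * Real.exp (c₂ + lam + c₃ * σa * ((Real.log (astar / c₁) - c₂) / c₃)) = astar)
      ↔ (σa = 1 ∧ lam = 0)) := by
  have formula : ∀ astar : ℝ, 0 < astar →
      c₁ * exp (c₂ + lam + c₃ * σa * ((log (astar / c₁) - c₂) / c₃))
        = c₁ * (astar / c₁) ^ σa * exp (lam + (1 - σa) * c₂) := fun a ha => by
    rw [counterfactual_exponent_eq hc₃.ne', exp_mul_log_add (div_pos ha hc₁), mul_assoc]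
  refine ⟨formula, ?_⟩
  calc (∀ a : ℝ, 0 < a → c₁ * exp (c₂ + lam + c₃ * σa * ((log (a / c₁) - c₂) / c₃)) = a)
      ↔ ∀ a : ℝ, 0 < a → c₁ * (a / c₁) ^ σa * exp (lam + (1 - σa) * c₂) = a :=
        forall₂_congr fun a ha => by rw [formula a ha]
    _ ↔ σa = 1 ∧ lam + (1 - σa) * c₂ = 0 := mul_div_rpow_mul_exp_eq_self_iff hc₁
    _ ↔ σa = 1 ∧ lam = 0 := and_congr_right fun h => by simp [h]

/-- In Example 1, the counterfactual income under the intervention `S := 1`, given the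
observed `S = 0` and `A = a*` (so `U_A = u* = (log(a*/c₁) − c₂)/c₃`), equals
`c₁ (a*/c₁)^{σ_a} e^{λ_a + (1 − σ_a) c₂}`; and it equals `a*` for all `a* > 0`
if and only if `σ_a = 1` and `λ_a = 0`. -/
theorem stmt_14 (c₁ c₂ c₃ lam σa : ℝ) (hc₁ : 0 < c₁) (hc₃ : 0 < c₃) (hσ : 0 < σa) :
    (∀ astar : ℝ, 0 < astar →
      c₁ * Real.exp (c₂ + lam + c₃ * σa * ((Real.log (astar / c₁) - c₂) / c₃))
        = c₁ * (astar / c₁) ^ σa * Real.exp (lam + (1 - σa) * c₂)) ∧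
    ((∀ astar : ℝ, 0 < astar →
        c₁ * Real.exp (c₂ + lam + c₃ * σa * ((Real.log (astar / c₁) - c₂) / c₃)) = astar)
      ↔ (σa = 1 ∧ lam = 0)) :=
  stmt_14_general c₁ c₂ c₃ lam σa hc₁ hc₃
end

section
/- If the decision function takes the form q(s, a) = expit(β₀ + β_a a + β_s s) and A = f_A(S, U_A) with the marginal-distribution-mapping invariance f_A(s', u) depending on s' (i.e., f_A(1, u) ≠ f_A(0, u) for some u with positive probability) or β_s ≠ 0, then Y = 1{U_Y < q(S, A)} is not counterfactually fair; conversely in Example 1, Y is counterfactually fair if σ_a = 1, λ_a = 0 and β_s = 0. -/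
/-!
Given `S`, the map `u ↦ f_A(S, u)` is invertible, so `σ(U_A) ⊆ σ(S, A)` and counterfactual
fairness forces `Y_1` and `Y_0` to have the same conditional expectation given `U_A`. Since
`U_Y` is uniform and independent of `U_A`, that conditional expectation is `q(s', U_A)` with
`q(s', u) = expit(β₀ + β_a f_A(s', u) + β_s s')`. The Gaussian law has full support and `q` is
continuous, so `q(1, ·) = q(0, ·)`; by injectivity of expit, `β_a (f_A(1, u) - f_A(0, u)) = -β_s`
for every `u`, and letting `u → -∞`, where `f_A(s, u) → 0`, gives `β_s = 0` and
`f_A(1, ·) = f_A(0, ·)`. Conversely, if `σ_a = 1`, `λ_a = 0` and `β_s = 0`, then `Y_{s'}` does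
not depend on `s'` at all.
-/

open MeasureTheory ProbabilityTheory Filter Topology Set

section Independence

variable {Ω α β F : Type*} {mΩ : MeasurableSpace Ω} {μ : Measure Ω} [IsFiniteMeasure μ]
  {mα : MeasurableSpace α} {mβ : MeasurableSpace β} [StandardBorelSpace β] [Nonempty β]
  [NormedAddCommGroup F] [NormedSpace ℝ F] [CompleteSpace F] {X : Ω → α} {Y : Ω → β}

theorem ProbabilityTheory.IndepFun.condDistrib_ae_eq_const (hXY : IndepFun X Y μ)
    (hX : Measurable X) (hY : Measurable Y) :
    condDistrib Y X μ =ᵐ[μ.map X] Kernel.const α (μ.map Y) := by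
  refine condDistrib_ae_eq_of_measure_eq_compProd X hY.aemeasurable ?_
  rw [Measure.compProd_const]
  exact (indepFun_iff_map_prod_eq_prod_map_map hX.aemeasurable hY.aemeasurable).mp hXY

theorem ProbabilityTheory.IndepFun.condExp_comp_prod_ae_eq (hXY : IndepFun X Y μ)
    (hX : Measurable X) (hY : Measurable Y) {f : α × β → F} (hf : StronglyMeasurable f)
    (hf_int : Integrable (fun ω => f (X ω, Y ω)) μ) :
    μ[fun ω => f (X ω, Y ω) | mα.comap X] =ᵐ[μ] fun ω => ∫ y, f (X ω, y) ∂(μ.map Y) := by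
  filter_upwards [condExp_prod_ae_eq_integral_condDistrib hX hY.aemeasurable hf hf_int,
    ae_of_ae_map hX.aemeasurable (hXY.condDistrib_ae_eq_const hX hY)] with ω hω hκ
  rw [hω, hκ, Kernel.const_apply]

end Independence

theorem integral_Ioo_ite_lt {t : ℝ} (ht0 : 0 ≤ t) (ht1 : t ≤ 1) :
    ∫ y in Ioo (0 : ℝ) 1, (if y < t then (1 : ℝ) else 0) = t := by
  have hind : (fun y : ℝ => if y < t then (1 : ℝ) else 0) = (Iio t).indicator 1 := by
    ext y
    simp [indicator_apply]
  rw [hind, integral_indicator_one measurableSet_Iio, measureReal_restrict_apply measurableSet_Iio,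
    Iio_inter_Ioo, min_eq_left ht1, Real.volume_real_Ioo_of_le ht0, sub_zero]

section CondExp

variable {Ω α : Type*} {mΩ : MeasurableSpace Ω} {μ : Measure Ω}

theorem condExp_ite_lt_ae_eq_of_indepFun [IsFiniteMeasure μ] {mα : MeasurableSpace α}
    {X : Ω → α} {U : Ω → ℝ} (hXU : IndepFun X U μ) (hX : Measurable X) (hU : Measurable U)
    (hU_unif : μ.map U = volume.restrict (Ioo 0 1)) {q : α → ℝ} (hq : Measurable q)
    (hq_mem : ∀ x, q x ∈ Icc 0 1) :
    μ[fun ω => if U ω < q (X ω) then (1 : ℝ) else 0 | mα.comap X] =ᵐ[μ] fun ω => q (X ω) := by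
  have hf : Measurable fun p : α × ℝ => if p.2 < q p.1 then (1 : ℝ) else 0 :=
    Measurable.ite (measurableSet_lt measurable_snd (hq.comp measurable_fst)) measurable_const
      measurable_const
  have hf_int : Integrable (fun ω => if U ω < q (X ω) then (1 : ℝ) else 0) μ := by
    refine Integrable.of_bound (hf.comp (hX.prodMk hU)).aestronglyMeasurable 1
      (ae_of_all _ fun ω => ?_)
    split_ifs <;> simp
  filter_upwards [hXU.condExp_comp_prod_ae_eq hX hU hf.stronglyMeasurable hf_int] with ω hω
  rw [hω, hU_unif, integral_Ioo_ite_lt (hq_mem _).1 (hq_mem _).2]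

theorem condExp_ae_eq_of_condExp_ae_eq_of_le {m₁ m₂ : MeasurableSpace Ω} {f g : Ω → ℝ}
    (hm₁₂ : m₁ ≤ m₂) (hm₂ : m₂ ≤ mΩ) [SigmaFinite (μ.trim hm₂)]
    (h : μ[f | m₂] =ᵐ[μ] μ[g | m₂]) : μ[f | m₁] =ᵐ[μ] μ[g | m₁] :=
  (condExp_condExp_of_le hm₁₂ hm₂).symm.trans
    ((condExp_congr_ae h).trans (condExp_condExp_of_le hm₁₂ hm₂))

end CondExp

theorem eq_of_comp_ae_eq_of_map_eq_gaussianReal {Ω : Type*} {mΩ : MeasurableSpace Ω}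
    {μ : Measure Ω} {X : Ω → ℝ} {m : ℝ} {v : NNReal} (hv : v ≠ 0) (hX : Measurable X)
    (hX_law : μ.map X = gaussianReal m v) {f g : ℝ → ℝ} (hf : Continuous f) (hg : Continuous g)
    (h : f ∘ X =ᵐ[μ] g ∘ X) : f = g := by
  have : (gaussianReal m v).IsOpenPosMeasure :=
    (gaussianReal_absolutelyContinuous' m hv).isOpenPosMeasure
  refine (hf.ae_eq_iff_eq (gaussianReal m v) hg).mp ?_
  rw [← hX_law]
  exact (ae_map_iff hX.aemeasurable (measurableSet_eq_fun hf.measurable hg.measurable)).mpr h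

theorem measurable_of_measurable_mul_exp_add_mul {Ω : Type*} {m : MeasurableSpace Ω}
    {S U : Ω → ℝ} {a k : ℝ → ℝ} {c : ℝ} (hc : c ≠ 0) (hk : ∀ s, k s ≠ 0) (ha : Measurable a)
    (hkm : Measurable k) (hS : Measurable[m] S)
    (hA : Measurable[m] fun ω => c * Real.exp (a (S ω) + k (S ω) * U ω)) : Measurable[m] U := by
  have hU : U = fun ω => (Real.log (c * Real.exp (a (S ω) + k (S ω) * U ω) / c) - a (S ω))
      / k (S ω) := by
    funext ω
    rw [mul_div_cancel_left₀ _ hc, Real.log_exp]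
    field_simp [hk (S ω)]
    ring
  rw [hU]
  exact (((hA.div_const c).log).sub (ha.comp hS)).div (hkm.comp hS)

theorem tendsto_mul_exp_add_mul_atBot {c a k : ℝ} (hk : 0 < k) :
    Tendsto (fun u => c * Real.exp (a + k * u)) atBot (𝓝 0) := by
  simpa using ((Real.tendsto_exp_atBot.comp (tendsto_atBot_add_const_left _ a
    (tendsto_id.const_mul_atBot hk))).const_mul c)

theorem eq_zero_and_eq_of_forall_mul_add_eq {l : Filter ℝ} [l.NeBot] {f₀ f₁ : ℝ → ℝ}
    {a b c : ℝ} (ha : a ≠ 0) (h₀ : Tendsto f₀ l (𝓝 c)) (h₁ : Tendsto f₁ l (𝓝 c))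
    (h : ∀ u, a * f₁ u + b = a * f₀ u) : b = 0 ∧ f₁ = f₀ := by
  have hb : b = 0 := by
    have hlim := (h₀.const_mul a).sub (h₁.const_mul a)
    rw [sub_self] at hlim
    refine tendsto_nhds_unique (tendsto_const_nhds.congr fun u => ?_) hlim
    linarith [h u]
  refine ⟨hb, funext fun u => ?_⟩
  simpa [hb, ha] using h u

theorem stmt_18_general {Ω : Type*} [MeasurableSpace Ω]
    (μ : Measure Ω) [IsProbabilityMeasure μ]
    (US UA UY : Ω → ℝ)
    (hUSm : Measurable US) (hUAm : Measurable UA) (hUYm : Measurable UY)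
    (hUA : Measure.map UA μ = gaussianReal 0 1)
    (hUY : Measure.map UY μ = volume.restrict (Set.Ioo (0 : ℝ) 1))
    (hindepY : IndepFun (fun ω => (US ω, UA ω)) UY μ)
    (c₁ c₂ c₃ lam σa β₀ βa βs : ℝ)
    (hc₁ : 0 < c₁) (hc₃ : 0 < c₃) (hσ : 0 < σa) (hβa : βa ≠ 0) :
    let expit : ℝ → ℝ := fun u => (1 + Real.exp (-u))⁻¹
    let fA : ℝ → ℝ → ℝ := fun s u => c₁ * Real.exp (c₂ + lam * s + c₃ * σa ^ s * u)
    let S : Ω → ℝ := fun ω => if US ω < 0.7 then 1 else 0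
    let A : Ω → ℝ := fun ω => fA (S ω) (UA ω)
    let Ycf : ℝ → Ω → ℝ := fun s' ω =>
      if UY ω < expit (β₀ + βa * fA s' (UA ω) + βs * s') then 1 else 0
    let m : MeasurableSpace Ω :=
      MeasurableSpace.comap (fun ω => (S ω, A ω)) inferInstance
    let CF : Prop := ∀ s' s'' : ℝ, (s' = 0 ∨ s' = 1) → (s'' = 0 ∨ s'' = 1) →
      μ[Ycf s' | m] =ᵐ[μ] μ[Ycf s'' | m]
    ((βs ≠ 0 ∨ ∃ u : ℝ, fA 1 u ≠ fA 0 u) → ¬ CF) ∧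
    ((σa = 1 ∧ lam = 0 ∧ βs = 0) → CF) := by
  intro expit fA S A Ycf
  -- `expit` is `Real.sigmoid` by definition.
  set q : ℝ → ℝ → ℝ := fun s' u => Real.sigmoid (β₀ + βa * fA s' u + βs * s')
  have hq : ∀ s', Continuous (q s') := fun s' => by fun_prop
  have hσpow : ∀ s : ℝ, 0 < c₃ * σa ^ s := fun s => mul_pos hc₃ (Real.rpow_pos_of_pos hσ s)
  have hS : Measurable S :=
    Measurable.ite (measurableSet_lt hUSm measurable_const) measurable_const measurable_const
  have hSA : Measurable fun ω => (S ω, A ω) := by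
    show Measurable fun ω => (S ω, c₁ * Real.exp (c₂ + lam * S ω + c₃ * σa ^ S ω * UA ω))
    fun_prop
  have hUA_SA : MeasurableSpace.comap UA inferInstance ≤
      MeasurableSpace.comap (fun ω => (S ω, A ω)) inferInstance := by
    have hSA' := comap_measurable (m := inferInstance) fun ω => (S ω, A ω)
    exact (measurable_of_measurable_mul_exp_add_mul (a := fun s => c₂ + lam * s)
      (k := fun s => c₃ * σa ^ s) hc₁.ne' (fun s => (hσpow s).ne') (by fun_prop) (by fun_prop)
      (measurable_fst.comp hSA') (measurable_snd.comp hSA')).comap_le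
  have hcond : ∀ s', μ[Ycf s' | MeasurableSpace.comap UA inferInstance] =ᵐ[μ] q s' ∘ UA :=
    fun s' => condExp_ite_lt_ae_eq_of_indepFun (hindepY.comp measurable_snd measurable_id) hUAm
      hUYm hUY (hq s').measurable fun u => ⟨Real.sigmoid_nonneg _, Real.sigmoid_le_one _⟩
  -- Once introduced, `m` becomes the default `MeasurableSpace Ω` instance.
  intro m CF
  refine ⟨fun hne hCF => ?_, ?_⟩
  · have hq_eq : q 1 = q 0 := eq_of_comp_ae_eq_of_map_eq_gaussianReal one_ne_zero hUAm hUA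
      (hq 1) (hq 0) <| (hcond 1).symm.trans <| (condExp_ae_eq_of_condExp_ae_eq_of_le hUA_SA
        hSA.comap_le (hCF 1 0 (Or.inr rfl) (Or.inl rfl))).trans (hcond 0)
    have hlin : ∀ u, βa * fA 1 u + βs = βa * fA 0 u := fun u => by
      linarith [Real.sigmoid_injective (congrFun hq_eq u)]
    obtain ⟨hβs, hfA⟩ := eq_zero_and_eq_of_forall_mul_add_eq hβa
      (tendsto_mul_exp_add_mul_atBot (hσpow 0)) (tendsto_mul_exp_add_mul_atBot (hσpow 1)) hlin
    rcases hne with hβs' | ⟨u, hu⟩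
    exacts [hβs' hβs, hu (congrFun hfA u)]
  · rintro ⟨hσ1, hlam, hβs⟩ s' s'' - -
    have hYcf : Ycf s' = Ycf s'' := by
      funext ω
      simp only [Ycf, fA, expit, hσ1, hlam, hβs, Real.one_rpow, zero_mul, add_zero]
    rw [hYcf]

/-- Example 1 SCM: `S = 1{U_S < 0.7}`, `A = c₁ exp(c₂ + λ_a S + c₃ σ_a^S U_A)` with `U_A`
standard normal, `Y = 1{U_Y < expit(β₀ + β_a A + β_s S)}` with `β_a ≠ 0`. If `β_s ≠ 0` or
`f_A(1,·) ≠ f_A(0,·)` somewhere, then `Y` is not counterfactually fair; conversely if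
`σ_a = 1`, `λ_a = 0` and `β_s = 0` then `Y` is counterfactually fair. -/
theorem stmt_18 {Ω : Type*} [MeasurableSpace Ω]
    (μ : Measure Ω) [IsProbabilityMeasure μ]
    (US UA UY : Ω → ℝ)
    (hUSm : Measurable US) (hUAm : Measurable UA) (hUYm : Measurable UY)
    (hUS : Measure.map US μ = volume.restrict (Set.Ioo (0 : ℝ) 1))
    (hUA : Measure.map UA μ = gaussianReal 0 1)
    (hUY : Measure.map UY μ = volume.restrict (Set.Ioo (0 : ℝ) 1))
    (hindepSA : IndepFun US UA μ)
    (hindepY : IndepFun (fun ω => (US ω, UA ω)) UY μ)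
    (c₁ c₂ c₃ lam σa β₀ βa βs : ℝ)
    (hc₁ : 0 < c₁) (hc₃ : 0 < c₃) (hσ : 0 < σa) (hβa : βa ≠ 0) :
    let expit : ℝ → ℝ := fun u => (1 + Real.exp (-u))⁻¹
    let fA : ℝ → ℝ → ℝ := fun s u => c₁ * Real.exp (c₂ + lam * s + c₃ * σa ^ s * u)
    let S : Ω → ℝ := fun ω => if US ω < 0.7 then 1 else 0
    let A : Ω → ℝ := fun ω => fA (S ω) (UA ω)
    let Ycf : ℝ → Ω → ℝ := fun s' ω =>
      if UY ω < expit (β₀ + βa * fA s' (UA ω) + βs * s') then 1 else 0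
    let m : MeasurableSpace Ω :=
      MeasurableSpace.comap (fun ω => (S ω, A ω)) inferInstance
    let CF : Prop := ∀ s' s'' : ℝ, (s' = 0 ∨ s' = 1) → (s'' = 0 ∨ s'' = 1) →
      μ[Ycf s' | m] =ᵐ[μ] μ[Ycf s'' | m]
    ((βs ≠ 0 ∨ ∃ u : ℝ, fA 1 u ≠ fA 0 u) → ¬ CF) ∧
    ((σa = 1 ∧ lam = 0 ∧ βs = 0) → CF) :=
  stmt_18_general μ US UA UY hUSm hUAm hUYm hUA hUY hindepY c₁ c₂ c₃ lam σa β₀ βa βs hc₁ hc₃ hσ hβa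
end
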